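/- Let d ≥ 2 and define R_1 f_0(r) := sup_{t∈[1,2], t ≤ r/2} (1/t)|∫_{r−t}^{r+t} f_0(s) ds|. Then for all 1 ≤ p ≤ q ≤ ∞, ‖R_1 f_0‖_{L^q(r^{d−1}dr)} ≲ ‖f_0‖_{L^p(s^{d−1}ds)}. -/

import Mathlib

/-! For `r ≥ 2` every admissible interval `[r - t, r + t]` lies in the window
`[max (r/2) (r - 2), r + 2]`, of length at most `4`, on which `s ∼ r`; for `r < 2` the
supremum is empty. So `R₁ f₀` is dominated by `G r = 1_{r ≥ 2} ∫_{window r} |f₀|`.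
Hölder on the window, where `s ^ (d - 1) ≥ 1`, gives `‖G‖_∞ ≤ 4 ‖f₀‖_p`; Hölder, Tonelli and
`r ^ (d - 1) ≤ 2 ^ (d - 1) s ^ (d - 1)` give `‖G‖_p ≲ ‖f₀‖_p`; and
`∫ G ^ q ≤ ‖G‖_∞ ^ (q - p) ∫ G ^ p` interpolates between the two. -/

open MeasureTheory Filter Set
open scoped ENNReal NNReal

noncomputable section

/-- The measure `r^{d-1} dr` on `(0,∞)`. -/
def muWeight (d : ℕ) : Measure ℝ :=
  ((volume : Measure ℝ).restrict (Set.Ioi 0)).withDensity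
    (fun s => ENNReal.ofReal (s ^ (d - 1)))

/-- `R_1 f_0(r) = sup_{t ∈ [1,2], t ≤ r/2} (1/t) |∫_{r-t}^{r+t} f_0(s) ds|`. -/
def R1op (f0 : ℝ → ℝ) (r : ℝ) : ℝ :=
  ⨆ t : {t : ℝ // t ∈ Set.Icc (1:ℝ) 2 ∧ t ≤ r/2},
    (1/(t:ℝ)) * |∫ s in (r - (t:ℝ))..(r + (t:ℝ)), f0 s|

lemma lintegral_setLIntegral_closedBall {G : ℝ → ℝ≥0∞} (hG : Measurable G) (a : ℝ) :
    ∫⁻ r, ∫⁻ s in Metric.closedBall r a, G s = ENNReal.ofReal (2 * a) * ∫⁻ s, G s := by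
  have hmeas : Measurable (Function.uncurry fun r s => (Metric.closedBall r a).indicator G s) := by
    have hset : MeasurableSet {x : ℝ × ℝ | dist x.2 x.1 ≤ a} :=
      measurableSet_le (continuous_snd.dist continuous_fst).measurable measurable_const
    exact (hG.comp measurable_snd).indicator hset
  simp_rw [← lintegral_indicator measurableSet_closedBall]
  rw [lintegral_lintegral_swap hmeas.aemeasurable, ← lintegral_const_mul' _ _ ENNReal.ofReal_ne_top]
  refine lintegral_congr fun s => ?_
  have hsymm : (fun r => (Metric.closedBall r a).indicator G s)
      = (Metric.closedBall s a).indicator fun _ => G s := by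
    ext r
    simp only [indicator, Metric.mem_closedBall, dist_comm]
  rw [hsymm, lintegral_indicator_const measurableSet_closedBall, Real.volume_closedBall, mul_comm]

lemma lintegral_rpow_le_of_le {α : Type*} [MeasurableSpace α] {μ : Measure α} {g : α → ℝ≥0∞}
    {M : ℝ≥0∞} (hM : M ≠ ⊤) (hg : ∀ x, g x ≤ M) {a b : ℝ} (ha : 0 ≤ a) (hab : a ≤ b) :
    ∫⁻ x, g x ^ b ∂μ ≤ M ^ (b - a) * ∫⁻ x, g x ^ a ∂μ := by
  rw [← lintegral_const_mul' _ _ (ENNReal.rpow_ne_top_of_nonneg (sub_nonneg.2 hab) hM)]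
  refine lintegral_mono fun x => ?_
  rw [← sub_add_cancel b a, ENNReal.rpow_add_of_nonneg _ _ (sub_nonneg.2 hab) ha,
    add_sub_cancel_right]
  gcongr
  exact hg x

namespace R1op

def window (r : ℝ) : Set ℝ := Icc (max (r / 2) (r - 2)) (r + 2)

def majorant (F : ℝ → ℝ≥0∞) (r : ℝ) : ℝ≥0∞ :=
  (Ici 2).indicator (fun r => ∫⁻ s in window r, F s) r

lemma volume_window_le (r : ℝ) : volume (window r) ≤ 4 := by
  rw [window, Real.volume_Icc, show (4 : ℝ≥0∞) = ENNReal.ofReal 4 by norm_num]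
  exact ENNReal.ofReal_le_ofReal (by linarith [le_max_right (r / 2) (r - 2)])

lemma half_le_of_mem_window {r s : ℝ} (hs : s ∈ window r) : r / 2 ≤ s :=
  (le_max_left _ _).trans hs.1

lemma window_subset_Ici_one {r : ℝ} (hr : 2 ≤ r) : window r ⊆ Ici 1 := fun s hs =>
  mem_Ici.2 (by linarith [half_le_of_mem_window hs])

lemma window_subset_closedBall (r : ℝ) : window r ⊆ Metric.closedBall r 2 := fun s hs => by
  rw [Real.closedBall_eq_Icc]
  exact ⟨(le_max_right _ _).trans hs.1, hs.2⟩

lemma Ioc_subset_window {r t : ℝ} (ht : t ≤ 2) (htr : t ≤ r / 2) :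
    Ioc (r - t) (r + t) ⊆ window r := fun s hs =>
  ⟨max_le (by linarith [hs.1]) (by linarith [hs.1]), by linarith [hs.2]⟩

lemma R1op_eq_zero_of_lt (f0 : ℝ → ℝ) {r : ℝ} (hr : r < 2) : R1op f0 r = 0 := by
  have : IsEmpty {t : ℝ // t ∈ Icc (1 : ℝ) 2 ∧ t ≤ r / 2} :=
    ⟨fun t => by linarith [t.2.1.1, t.2.2]⟩
  exact Real.iSup_of_isEmpty _

lemma R1op_le_lintegral_window (f0 : ℝ → ℝ) {r : ℝ}
    (hfin : ∫⁻ s in window r, ‖f0 s‖ₑ ≠ ⊤) :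
    R1op f0 r ≤ (∫⁻ s in window r, ‖f0 s‖ₑ).toReal := by
  refine Real.iSup_le (fun ⟨t, ⟨ht1, ht2⟩, htr⟩ => ?_) ENNReal.toReal_nonneg
  have hint : |∫ s in (r - t)..(r + t), f0 s| ≤ (∫⁻ s in window r, ‖f0 s‖ₑ).toReal := by
    rw [intervalIntegral.integral_of_le (by linarith), ← Real.norm_eq_abs]
    refine (norm_integral_le_lintegral_norm _).trans (ENNReal.toReal_mono hfin ?_)
    simp only [ofReal_norm]
    exact lintegral_mono_set (Ioc_subset_window ht2 htr)
  calc 1 / t * |∫ s in (r - t)..(r + t), f0 s| ≤ |∫ s in (r - t)..(r + t), f0 s| :=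
        mul_le_of_le_one_left (abs_nonneg _) ((div_le_one (by linarith)).2 ht1)
    _ ≤ _ := hint

lemma enorm_R1op_le (f0 : ℝ → ℝ) (r : ℝ) : ‖R1op f0 r‖ₑ ≤ majorant (fun s => ‖f0 s‖ₑ) r := by
  rcases lt_or_ge r 2 with hr | hr
  · simp [R1op_eq_zero_of_lt f0 hr]
  rw [majorant, indicator_of_mem (mem_Ici.2 hr)]
  by_cases hfin : ∫⁻ s in window r, ‖f0 s‖ₑ = ⊤
  · exact hfin ▸ le_top
  have hnonneg : 0 ≤ R1op f0 r := Real.iSup_nonneg fun t =>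
    mul_nonneg (one_div_nonneg.2 (by linarith [t.2.1.1])) (abs_nonneg _)
  rw [Real.enorm_eq_ofReal hnonneg]
  exact ENNReal.ofReal_le_of_le_toReal (R1op_le_lintegral_window f0 hfin)

lemma lintegral_window_le_eLpNorm {f : ℝ → ℝ} {p : ℝ≥0∞} (hp : 1 ≤ p)
    (hf : AEStronglyMeasurable f volume) (r : ℝ) :
    ∫⁻ s in window r, ‖f s‖ₑ ≤ 4 * eLpNorm f p (volume.restrict (window r)) := by
  rw [← eLpNorm_one_eq_lintegral_enorm, mul_comm]
  refine (eLpNorm_le_eLpNorm_mul_rpow_measure_univ hp hf.restrict).trans ?_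
  rw [ENNReal.toReal_one, div_one, Measure.restrict_apply_univ]
  have hinv : 1 / p.toReal ≤ 1 := by
    rw [one_div, ← ENNReal.toReal_inv, ← ENNReal.toReal_one]
    exact ENNReal.toReal_mono ENNReal.one_ne_top (ENNReal.inv_le_one.2 hp)
  gcongr
  calc volume (window r) ^ (1 - 1 / p.toReal)
      ≤ 4 ^ (1 - 1 / p.toReal) := ENNReal.rpow_le_rpow (volume_window_le r) (by linarith)
    _ ≤ 4 ^ (1 : ℝ) := ENNReal.rpow_le_rpow_of_exponent_le (by norm_num)
        (by linarith [one_div_nonneg.2 (ENNReal.toReal_nonneg (a := p))])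
    _ = 4 := ENNReal.rpow_one 4

lemma volume_restrict_Ici_one_le_muWeight (d : ℕ) : volume.restrict (Ici 1) ≤ muWeight d := by
  have hsub : Ici (1 : ℝ) ⊆ Ioi 0 := Ici_subset_Ioi.2 one_pos
  rw [← Measure.restrict_restrict_of_subset hsub, ← withDensity_indicator_one measurableSet_Ici,
    muWeight]
  refine withDensity_mono (ae_restrict_of_forall_mem measurableSet_Ioi fun s _ => ?_)
  by_cases hs : s ∈ Ici (1 : ℝ)
  · rw [indicator_of_mem hs, Pi.one_apply, ← ENNReal.ofReal_one]
    exact ENNReal.ofReal_le_ofReal (one_le_pow₀ hs)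
  · simp [indicator_of_notMem hs]

lemma majorant_le_eLpNorm {f : ℝ → ℝ} {p : ℝ≥0∞} (d : ℕ) (hp : 1 ≤ p)
    (hf : AEStronglyMeasurable f volume) (r : ℝ) :
    majorant (fun s => ‖f s‖ₑ) r ≤ 4 * eLpNorm f p (muWeight d) := by
  rcases lt_or_ge r 2 with hr | hr
  · simp [majorant, indicator_of_notMem (notMem_Ici.2 hr)]
  rw [majorant, indicator_of_mem (mem_Ici.2 hr)]
  refine (lintegral_window_le_eLpNorm hp hf r).trans
    (mul_le_mul_right (eLpNorm_mono_measure _ ?_) 4)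
  exact (Measure.restrict_mono (window_subset_Ici_one hr) le_rfl).trans
    (volume_restrict_Ici_one_le_muWeight d)

lemma majorant_rpow_le {f : ℝ → ℝ} {p : ℝ≥0∞} (hp : 1 ≤ p) (hp_top : p ≠ ⊤)
    (hf : AEStronglyMeasurable f volume) (r : ℝ) :
    majorant (fun s => ‖f s‖ₑ) r ^ p.toReal
      ≤ 4 ^ p.toReal * majorant (fun s => ‖f s‖ₑ ^ p.toReal) r := by
  have hp0 : 0 < p.toReal := ENNReal.toReal_pos (by positivity) hp_top
  rcases lt_or_ge r 2 with hr | hr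
  · simp [majorant, indicator_of_notMem (notMem_Ici.2 hr), hp0]
  simp only [majorant, indicator_of_mem (mem_Ici.2 hr)]
  calc (∫⁻ s in window r, ‖f s‖ₑ) ^ p.toReal
      ≤ (4 * eLpNorm f p (volume.restrict (window r))) ^ p.toReal := by
        gcongr
        exact lintegral_window_le_eLpNorm hp hf r
    _ = 4 ^ p.toReal * ∫⁻ s in window r, ‖f s‖ₑ ^ p.toReal := by
        rw [ENNReal.mul_rpow_of_nonneg _ _ hp0.le, eLpNorm_eq_lintegral_rpow_enorm_toReal
          (by positivity) hp_top, ← ENNReal.rpow_mul, one_div_mul_cancel hp0.ne', ENNReal.rpow_one]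

lemma lintegral_muWeight (d : ℕ) (g : ℝ → ℝ≥0∞) :
    ∫⁻ r, g r ∂muWeight d = ∫⁻ r in Ioi 0, ENNReal.ofReal (r ^ (d - 1)) * g r :=
  lintegral_withDensity_eq_lintegral_mul_non_measurable _
    (ENNReal.measurable_ofReal.comp (measurable_id.pow_const _))
    (ae_of_all _ fun _ => ENNReal.ofReal_lt_top) g

lemma ofReal_pow_le_of_mem_window (n : ℕ) {r s : ℝ} (hr : 0 ≤ r) (hs : s ∈ window r) :
    ENNReal.ofReal (r ^ n) ≤ 2 ^ n * ENNReal.ofReal (s ^ n) := by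
  have h2s : r ≤ 2 * s := by linarith [half_le_of_mem_window hs]
  rw [← ENNReal.ofReal_ofNat 2, ← ENNReal.ofReal_pow zero_le_two,
    ← ENNReal.ofReal_mul (by positivity), ← mul_pow]
  exact ENNReal.ofReal_le_ofReal (pow_le_pow_left₀ hr h2s n)

lemma weight_mul_majorant_le (d : ℕ) (F : ℝ → ℝ≥0∞) (r : ℝ) :
    ENNReal.ofReal (r ^ (d - 1)) * majorant F r ≤ ∫⁻ s in Metric.closedBall r 2,
      2 ^ (d - 1) * (Ioi 0).indicator (fun s => ENNReal.ofReal (s ^ (d - 1)) * F s) s := by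
  rcases lt_or_ge r 2 with hr | hr
  · simp [majorant, indicator_of_notMem (notMem_Ici.2 hr)]
  rw [majorant, indicator_of_mem (mem_Ici.2 hr), ← lintegral_const_mul' _ _ ENNReal.ofReal_ne_top]
  refine (setLIntegral_mono' measurableSet_Icc fun s hs => ?_).trans
    (lintegral_mono_set (window_subset_closedBall r))
  have hs0 : s ∈ Ioi (0 : ℝ) := mem_Ioi.2 (one_pos.trans_le (window_subset_Ici_one hr hs))
  rw [indicator_of_mem hs0, ← mul_assoc]
  gcongr
  exact ofReal_pow_le_of_mem_window _ (by linarith) hs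

lemma lintegral_majorant_le (d : ℕ) {F : ℝ → ℝ≥0∞} (hF : Measurable F) :
    ∫⁻ r, majorant F r ∂muWeight d ≤ 4 * 2 ^ (d - 1) * ∫⁻ s, F s ∂muWeight d := by
  have hw : Measurable fun s : ℝ => ENNReal.ofReal (s ^ (d - 1)) :=
    ENNReal.measurable_ofReal.comp (measurable_id.pow_const _)
  rw [lintegral_muWeight, lintegral_muWeight]
  calc ∫⁻ r in Ioi 0, ENNReal.ofReal (r ^ (d - 1)) * majorant F r
      ≤ ∫⁻ r, ∫⁻ s in Metric.closedBall r 2,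
          2 ^ (d - 1) * (Ioi 0).indicator (fun s => ENNReal.ofReal (s ^ (d - 1)) * F s) s :=
        (setLIntegral_le_lintegral _ _).trans (lintegral_mono (weight_mul_majorant_le d F))
    _ = 4 * 2 ^ (d - 1) * ∫⁻ s in Ioi 0, ENNReal.ofReal (s ^ (d - 1)) * F s := by
        have hG : Measurable ((Ioi 0).indicator fun s => ENNReal.ofReal (s ^ (d - 1)) * F s) :=
          (hw.mul hF).indicator measurableSet_Ioi
        rw [lintegral_setLIntegral_closedBall (hG.const_mul _), lintegral_const_mul _ hG,
          lintegral_indicator measurableSet_Ioi, ← mul_assoc]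
        norm_num

lemma lintegral_majorant_rpow_le (d : ℕ) {f : ℝ → ℝ} {p : ℝ≥0∞} (hp : 1 ≤ p) (hp_top : p ≠ ⊤)
    (hf : Measurable f) :
    ∫⁻ r, majorant (fun s => ‖f s‖ₑ) r ^ p.toReal ∂muWeight d
      ≤ 4 ^ p.toReal * (4 * 2 ^ (d - 1)) * eLpNorm f p (muWeight d) ^ p.toReal := by
  have hp0 : 0 < p.toReal := ENNReal.toReal_pos (by positivity) hp_top
  calc ∫⁻ r, majorant (fun s => ‖f s‖ₑ) r ^ p.toReal ∂muWeight d
      ≤ ∫⁻ r, 4 ^ p.toReal * majorant (fun s => ‖f s‖ₑ ^ p.toReal) r ∂muWeight d :=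
        lintegral_mono (majorant_rpow_le hp hp_top hf.aestronglyMeasurable)
    _ = 4 ^ p.toReal * ∫⁻ r, majorant (fun s => ‖f s‖ₑ ^ p.toReal) r ∂muWeight d :=
        lintegral_const_mul' _ _ (by finiteness)
    _ ≤ 4 ^ p.toReal * (4 * 2 ^ (d - 1) * ∫⁻ s, ‖f s‖ₑ ^ p.toReal ∂muWeight d) := by
        gcongr
        exact lintegral_majorant_le d (hf.enorm.pow_const _)
    _ = 4 ^ p.toReal * (4 * 2 ^ (d - 1)) * eLpNorm f p (muWeight d) ^ p.toReal := by
        rw [eLpNorm_eq_eLpNorm' (by positivity) hp_top,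
          ← lintegral_rpow_enorm_eq_rpow_eLpNorm' hp0]
        ring

lemma eLpNorm_majorant_le (d : ℕ) {f : ℝ → ℝ} {p q : ℝ≥0∞} (hp : 1 ≤ p) (hpq : p ≤ q)
    (hf : Measurable f) :
    eLpNorm (majorant fun s => ‖f s‖ₑ) q (muWeight d)
      ≤ 4 * (4 * 2 ^ (d - 1)) ^ (1 / q.toReal) * eLpNorm f p (muWeight d) := by
  set N := eLpNorm f p (muWeight d)
  have hbound := majorant_le_eLpNorm d hp hf.aestronglyMeasurable
  rcases eq_or_ne q ⊤ with rfl | hq_top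
  -- `(⊤ : ℝ≥0∞).toReal = 0` and `1 / 0 = 0`, so for `q = ∞` the constant is `4`.
  · rw [eLpNorm_exponent_top, ENNReal.toReal_top, div_zero, ENNReal.rpow_zero, mul_one]
    exact eLpNormEssSup_le_of_ae_enorm_bound (ae_of_all _ hbound)
  rcases eq_or_ne N ⊤ with hN | hN
  · have hC : 4 * (4 * 2 ^ (d - 1) : ℝ≥0∞) ^ (1 / q.toReal) ≠ 0 :=
      mul_ne_zero four_ne_zero (ENNReal.rpow_pos (by positivity) (by finiteness)).ne'
    rw [hN, ENNReal.mul_top hC]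
    exact le_top
  have hp_top : p ≠ ⊤ := ne_top_of_le_ne_top hq_top hpq
  have hp0 : 0 < p.toReal := ENNReal.toReal_pos (by positivity) hp_top
  have hq_ne : q ≠ 0 := (zero_lt_one.trans_le (hp.trans hpq)).ne'
  have hq0 : 0 < q.toReal := ENNReal.toReal_pos hq_ne hq_top
  have hpq' : p.toReal ≤ q.toReal := ENNReal.toReal_mono hq_top hpq
  set K : ℝ≥0∞ := 4 * 2 ^ (d - 1)
  have hlint : ∫⁻ r, majorant (fun s => ‖f s‖ₑ) r ^ q.toReal ∂muWeight d
      ≤ 4 ^ q.toReal * K * N ^ q.toReal := by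
    have hsplit (x : ℝ≥0∞) : x ^ (q.toReal - p.toReal) * x ^ p.toReal = x ^ q.toReal := by
      rw [← ENNReal.rpow_add_of_nonneg _ _ (sub_nonneg.2 hpq') hp0.le, sub_add_cancel]
    calc ∫⁻ r, majorant (fun s => ‖f s‖ₑ) r ^ q.toReal ∂muWeight d
        ≤ (4 * N) ^ (q.toReal - p.toReal) *
            ∫⁻ r, majorant (fun s => ‖f s‖ₑ) r ^ p.toReal ∂muWeight d :=
          lintegral_rpow_le_of_le (by finiteness) hbound hp0.le hpq'
      _ ≤ (4 * N) ^ (q.toReal - p.toReal) * (4 ^ p.toReal * K * N ^ p.toReal) := by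
          gcongr
          exact lintegral_majorant_rpow_le d hp hp_top hf
      _ = 4 ^ q.toReal * K * N ^ q.toReal := by
          rw [ENNReal.mul_rpow_of_nonneg _ _ (sub_nonneg.2 hpq'), ← hsplit 4, ← hsplit N]
          ring
  rw [eLpNorm_eq_lintegral_rpow_enorm_toReal hq_ne hq_top]
  simp only [enorm_eq_self]
  calc (∫⁻ r, majorant (fun s => ‖f s‖ₑ) r ^ q.toReal ∂muWeight d) ^ (1 / q.toReal)
      ≤ (4 ^ q.toReal * K * N ^ q.toReal) ^ (1 / q.toReal) := by gcongr
    _ = 4 * K ^ (1 / q.toReal) * N := by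
        rw [ENNReal.mul_rpow_of_nonneg _ _ (by positivity),
          ENNReal.mul_rpow_of_nonneg _ _ (by positivity), ← ENNReal.rpow_mul, ← ENNReal.rpow_mul,
          mul_one_div_cancel hq0.ne', ENNReal.rpow_one, ENNReal.rpow_one]

end R1op

open R1op

theorem R1_bound_general (d : ℕ) (p q : ℝ≥0∞) (hp : 1 ≤ p) (hpq : p ≤ q) :
    ∃ C : ℝ≥0∞, C ≠ ⊤ ∧ ∀ f0 : ℝ → ℝ, Measurable f0 →
      eLpNorm (R1op f0) q (muWeight d) ≤ C * eLpNorm f0 p (muWeight d) := by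
  refine ⟨4 * (4 * 2 ^ (d - 1)) ^ (1 / q.toReal), by finiteness, fun f0 hf => ?_⟩
  calc eLpNorm (R1op f0) q (muWeight d)
      ≤ eLpNorm (majorant fun s => ‖f0 s‖ₑ) q (muWeight d) :=
        eLpNorm_mono_enorm fun r => (enorm_R1op_le f0 r).trans_eq (enorm_eq_self _).symm
    _ ≤ _ := eLpNorm_majorant_le d hp hpq hf

theorem R1_bound (d : ℕ) (hd : 2 ≤ d) (p q : ℝ≥0∞) (hp : 1 ≤ p) (hpq : p ≤ q) :
    ∃ C : ℝ≥0∞, C ≠ ⊤ ∧ ∀ f0 : ℝ → ℝ, Measurable f0 →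
      eLpNorm (R1op f0) q (muWeight d) ≤ C * eLpNorm f0 p (muWeight d) :=
  R1_bound_general d p q hp hpq
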